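/- Let h : ℝ^d ∖ {0} → ℝ be twice continuously differentiable, even, and harmonic (Δh(x) = 0 for all x ≠ 0), and set Φ(θ, w) = h(θ − w). Fix w₁,…,w_k ∈ ℝ^d, a ∈ ℝ^k, b ∈ ℝ^k, and let L be the loss. Then for every configuration θ = (θ₁,…,θ_k) such that for each i, θ_i ∉ {θ_j : j ≠ i} ∪ {w₁,…,w_k}, and for every i, the trace of the Hessian of L with respect to the block variable θ_i vanishes: Δ_{θ_i} L(θ) = 2 Σ_{j≠i} a_i a_j Δh(θ_i − θ_j) + 2 Σ_{j=1}^k a_i b_j Δh(θ_i − w_j) = 0. In particular, at no such configuration is the Hessian ∇²_{θ_i} L(θ) positive definite, so L has no strict local minimum among such configurations at which some block Hessian is positive definite (Earnshaw-type theorem). -/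

import Mathlib

/-!
Earnshaw's argument: with `θ j` (`j ≠ i`) and the `w j` fixed, the loss as a function of `θ i`
is, up to a constant, a finite linear combination of translates `x ↦ h (x - p)` (evenness of `h`
merges the two cross terms `h (θ i - θ j)` and `h (θ j - θ i)`). The Laplacian commutes with
translations and with linear combinations of functions that are `C²` at the point, so the block
Laplacian is the same combination of values of `Δh` away from `0`, all of which vanish. A Hessian
with zero trace cannot be positive definite.
-/

open Finset

/-- The Laplacian of `f : ℝ^d → ℝ` at `x`: the trace of the Hessian, i.e. the sum of
the second derivatives in the coordinate directions. -/
noncomputable def laplacian {d : ℕ} (f : EuclideanSpace ℝ (Fin d) → ℝ)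
    (x : EuclideanSpace ℝ (Fin d)) : ℝ :=
  ∑ i : Fin d, iteratedFDeriv ℝ 2 f x ![EuclideanSpace.single i 1, EuclideanSpace.single i 1]

open Function

section Potential

variable {E F ι : Type*} [NormedAddCommGroup E] [NormedSpace ℝ E]
  [NormedAddCommGroup F] [NormedSpace ℝ F]

theorem iteratedFDeriv_const_add_sum_smul_comp_sub {n : ℕ} (hn : n ≠ 0) (C : F) {f : E → F}
    (s : Finset ι) (c : ι → ℝ) (p : ι → E) {x : E}
    (hf : ∀ j ∈ s, ContDiffAt ℝ n f (x - p j)) :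
    iteratedFDeriv ℝ n (fun y => C + ∑ j ∈ s, c j • f (y - p j)) x
      = ∑ j ∈ s, c j • iteratedFDeriv ℝ n f (x - p j) := by
  have hshift : ∀ j ∈ s, ContDiffAt ℝ n (fun y => f (y - p j)) x := fun j hj =>
    (hf j hj).comp x (contDiffAt_id.sub contDiffAt_const)
  have hterm : ∀ j ∈ s, ContDiffAt ℝ n (fun y => c j • f (y - p j)) x := fun j hj =>
    (hshift j hj).const_smul (c j)
  rw [fun_iteratedFDeriv_add_apply contDiffAt_const (.sum hterm), iteratedFDeriv_const_of_ne hn,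
    Pi.zero_apply, zero_add, iteratedFDeriv_fun_sum_apply hterm]
  refine sum_congr rfl fun j hj => ?_
  rw [iteratedFDeriv_const_smul_apply' (hshift j hj), iteratedFDeriv_comp_sub]

end Potential

theorem laplacian_const_add_sum_mul_comp_sub {d : ℕ} {ι : Type*} (C : ℝ)
    {h : EuclideanSpace ℝ (Fin d) → ℝ} (s : Finset ι) (c : ι → ℝ)
    (p : ι → EuclideanSpace ℝ (Fin d)) {x : EuclideanSpace ℝ (Fin d)}
    (hh : ∀ j ∈ s, ContDiffAt ℝ 2 h (x - p j)) :
    laplacian (fun y => C + ∑ j ∈ s, c j * h (y - p j)) x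
      = ∑ j ∈ s, c j * laplacian h (x - p j) := by
  have hderiv := iteratedFDeriv_const_add_sum_smul_comp_sub two_ne_zero C s c p hh
  simp only [smul_eq_mul] at hderiv
  simp only [laplacian, hderiv, _root_.sum_apply, smul_apply, smul_eq_mul, mul_sum]
  exact sum_comm

theorem not_forall_pos_of_laplacian_eq_zero {d : ℕ} (hd : 0 < d)
    {f : EuclideanSpace ℝ (Fin d) → ℝ} {x : EuclideanSpace ℝ (Fin d)}
    (hf : laplacian f x = 0) :
    ¬ ∀ v : EuclideanSpace ℝ (Fin d), v ≠ 0 → 0 < iteratedFDeriv ℝ 2 f x ![v, v] := by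
  intro hpos
  have : 0 < laplacian f x :=
    sum_pos (fun j _ => hpos _ (by simp)) (univ_nonempty_iff.2 ⟨⟨0, hd⟩⟩)
  exact this.ne' hf

section Update

variable {ι α M : Type*} [Fintype ι] [DecidableEq ι] [AddCommMonoid M]

theorem sum_update_eq_add_sum_erase (g : ι → α → M) (θ : ι → α) (i : ι) (x : α) :
    ∑ p, g p (update θ i x p) = g i x + ∑ p ∈ univ.erase i, g p (θ p) := by
  rw [← add_sum_erase _ _ (mem_univ i), update_self]
  congr 1
  exact sum_congr rfl fun p hp => by rw [update_of_ne (ne_of_mem_erase hp)]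

theorem sum_sum_update_eq (F : ι → ι → α → α → M) (θ : ι → α) (i : ι) (x : α) :
    ∑ p, ∑ q, F p q (update θ i x p) (update θ i x q)
      = F i i x x + ∑ q ∈ univ.erase i, (F i q x (θ q) + F q i (θ q) x)
        + ∑ p ∈ univ.erase i, ∑ q ∈ univ.erase i, F p q (θ p) (θ q) := by
  rw [sum_congr rfl fun p _ => sum_update_eq_add_sum_erase (F p · (update θ i x p) ·) θ i x]
  rw [sum_update_eq_add_sum_erase (fun p y => F p i y x + ∑ q ∈ univ.erase i, F p q y (θ q)),
    sum_add_distrib, sum_add_distrib]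
  abel

end Update

theorem exists_const_loss_update_eq {E ι : Type*} [AddCommGroup E] [Fintype ι]
    [DecidableEq ι] (h : E → ℝ) (heven : ∀ x, h (-x) = h x) (w : ι → E) (a b : ι → ℝ)
    (θ : ι → E) (i : ι) :
    ∃ C : ℝ, ∀ x : E,
      ∑ p, ∑ q, (a p * a q * h (update θ i x p - update θ i x q)
          + 2 * (a p * b q) * h (update θ i x p - w q) + b p * b q * h (w p - w q))
        = C + 2 * ∑ j ∈ univ.erase i, a i * a j * h (x - θ j)
          + 2 * ∑ j, a i * b j * h (x - w j) := by
  set K : ι → ℝ := fun q =>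
    b i * b q * h (w i - w q) + 2 * (a q * b i) * h (θ q - w i) + b q * b i * h (w q - w i)
  refine ⟨a i * a i * h 0 + b i * b i * h (w i - w i) + ∑ q ∈ univ.erase i, K q
      + ∑ p ∈ univ.erase i, ∑ q ∈ univ.erase i, (a p * a q * h (θ p - θ q)
          + 2 * (a p * b q) * h (θ p - w q) + b p * b q * h (w p - w q)), fun x => ?_⟩
  have hpair : ∀ q, (a i * a q * h (x - θ q) + 2 * (a i * b q) * h (x - w q)
        + b i * b q * h (w i - w q)) + (a q * a i * h (θ q - x)
        + 2 * (a q * b i) * h (θ q - w i) + b q * b i * h (w q - w i))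
      = K q + (2 * (a i * a q * h (x - θ q)) + 2 * (a i * b q * h (x - w q))) := fun q => by
    rw [← neg_sub x (θ q), heven]
    ring
  rw [sum_sum_update_eq (fun p q y z => a p * a q * h (y - z) + 2 * (a p * b q) * h (y - w q)
      + b p * b q * h (w p - w q)) θ i x]
  simp only [sub_self, hpair, sum_add_distrib, ← mul_sum]
  rw [← add_sum_erase _ _ (mem_univ i)]
  ring

theorem stmt13 {d k : ℕ} (hd : 0 < d)
    (h : EuclideanSpace ℝ (Fin d) → ℝ)
    (hC2 : ContDiffOn ℝ 2 h {(0 : EuclideanSpace ℝ (Fin d))}ᶜ)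
    (heven : ∀ x, h (-x) = h x)
    (hharm : ∀ x : EuclideanSpace ℝ (Fin d), x ≠ 0 → laplacian h x = 0)
    (w : Fin k → EuclideanSpace ℝ (Fin d)) (a b : Fin k → ℝ)
    (L : (Fin k → EuclideanSpace ℝ (Fin d)) → ℝ)
    (hL : L = fun θ => ∑ i, ∑ j,
      (a i * a j * h (θ i - θ j) + 2 * (a i * b j) * h (θ i - w j)
        + b i * b j * h (w i - w j))) :
    ∀ θ : Fin k → EuclideanSpace ℝ (Fin d),
      (∀ i : Fin k, (∀ j, j ≠ i → θ i ≠ θ j) ∧ (∀ j, θ i ≠ w j)) →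
      ∀ i : Fin k,
        laplacian (fun x => L (Function.update θ i x)) (θ i)
            = 2 * ∑ j ∈ Finset.univ.erase i, a i * a j * laplacian h (θ i - θ j)
              + 2 * ∑ j, a i * b j * laplacian h (θ i - w j) ∧
        laplacian (fun x => L (Function.update θ i x)) (θ i) = 0 ∧
        ¬ (∀ v : EuclideanSpace ℝ (Fin d), v ≠ 0 →
            0 < iteratedFDeriv ℝ 2 (fun x => L (Function.update θ i x)) (θ i) ![v, v]) := by
  intro θ hθ i
  obtain ⟨C, hC⟩ := exists_const_loss_update_eq h heven w a b θ i
  -- As a function of `θ i`, the loss is a constant plus the potential of point charges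
  -- `2 aᵢ aⱼ` at `θ j` (`j ≠ i`) and `2 aᵢ bⱼ` at `w j`.
  set s := (univ.erase i).disjSum (univ : Finset (Fin k))
  set c : Fin k ⊕ Fin k → ℝ := Sum.elim (fun j => 2 * (a i * a j)) (fun j => 2 * (a i * b j))
  set p : Fin k ⊕ Fin k → EuclideanSpace ℝ (Fin d) := Sum.elim θ w
  have hp : ∀ j ∈ s, θ i - p j ≠ 0 := by
    rintro (j | j) hj
    · exact sub_ne_zero.2 ((hθ i).1 j (ne_of_mem_erase (inl_mem_disjSum.1 hj)))
    · exact sub_ne_zero.2 ((hθ i).2 j)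
  have hblock : (fun x => L (update θ i x)) = fun x => C + ∑ j ∈ s, c j * h (x - p j) := by
    funext x
    simp only [hL, hC]
    simp only [s, c, p, sum_disjSum, Sum.elim_inl, Sum.elim_inr, mul_sum, mul_assoc, add_assoc]
  have hpot : laplacian (fun x => L (update θ i x)) (θ i)
      = ∑ j ∈ s, c j * laplacian h (θ i - p j) := by
    rw [hblock, laplacian_const_add_sum_mul_comp_sub C s c p fun j hj =>
      hC2.contDiffAt (isOpen_compl_singleton.mem_nhds (hp j hj))]
  have hΔ : laplacian (fun x => L (update θ i x)) (θ i)
      = 2 * ∑ j ∈ univ.erase i, a i * a j * laplacian h (θ i - θ j)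
        + 2 * ∑ j, a i * b j * laplacian h (θ i - w j) := by
    simp only [hpot, s, c, p, sum_disjSum, Sum.elim_inl, Sum.elim_inr, mul_sum, mul_assoc]
  have hΔ0 : laplacian (fun x => L (update θ i x)) (θ i) = 0 := by
    rw [hpot]
    exact sum_eq_zero fun j hj => by rw [hharm _ (hp j hj), mul_zero]
  exact ⟨hΔ, hΔ0, not_forall_pos_of_laplacian_eq_zero hd hΔ0⟩
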